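/- arXiv:2006.01065 — 2 statements merged into one kernel-verified Lean document; each statement's English description precedes it below -/
import Mathlib

section
/- Let x* ∈ R^n be a nonzero vector and G(x) = (3‖x‖₂² − 1)x − 2(xᵀx*)x* with ‖x*‖₂ = 1. The only fixed points of G (i.e., zeros of G) are x = 0, points x with ‖x‖₂² = 1/3 and xᵀx* = 0, and x = ±x*. -/
open scoped RealInnerProductSpace

/-- For a nonzero unit vector `xs` and `G x = (3‖x‖² − 1) • x − (2 ⟪x, xs⟫) • xs`,
the zeros of `G` are exactly `0`, the points with `‖x‖² = 1/3` orthogonal to `xs`,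
and `± xs`. -/
theorem stmt4 (n : ℕ) (xs : EuclideanSpace ℝ (Fin n)) (hxs_ne : xs ≠ 0) (hxs : ‖xs‖ = 1)
    (G : EuclideanSpace ℝ (Fin n) → EuclideanSpace ℝ (Fin n))
    (hG : ∀ x, G x = (3 * ‖x‖ ^ 2 - 1) • x - (2 * ⟪x, xs⟫) • xs)
    (x : EuclideanSpace ℝ (Fin n)) :
    G x = 0 ↔ x = 0 ∨ (‖x‖ ^ 2 = 1 / 3 ∧ ⟪x, xs⟫ = 0) ∨ x = xs ∨ x = -xs := by
  have hxs1 : ⟪xs, xs⟫ = 1 := by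
    rw [real_inner_self_eq_norm_sq, hxs]; norm_num
  rw [hG]
  constructor
  · intro h
    have hx : (3 * ‖x‖ ^ 2 - 1) • x = (2 * ⟪x, xs⟫) • xs := by
      rwa [sub_eq_zero] at h
    by_cases ha : ⟪x, xs⟫ = 0
    · have h0 : (3 * ‖x‖ ^ 2 - 1) • x = 0 := by rw [hx, ha]; simp
      rcases smul_eq_zero.mp h0 with h1 | h2
      · exact Or.inr (Or.inl ⟨by linarith, ha⟩)
      · exact Or.inl h2
    · have h1 : (3 * ‖x‖ ^ 2 - 1) * ⟪x, xs⟫ = 2 * ⟪x, xs⟫ := by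
        have h2 := congrArg (fun v => ⟪v, xs⟫) hx
        simp only [real_inner_smul_left, hxs1, mul_one] at h2
        exact h2
      have h3 : 3 * ‖x‖ ^ 2 - 1 = 2 := mul_right_cancel₀ ha h1
      have ht : ‖x‖ ^ 2 = 1 := by linarith
      have hx2 : x = ⟪x, xs⟫ • xs := by
        have h4 : (2 : ℝ) • x = (2 : ℝ) • (⟪x, xs⟫ • xs) := by
          rw [smul_smul, ← hx, h3]
        exact smul_right_injective _ two_ne_zero h4
      have ha2 : ⟪x, xs⟫ ^ 2 = 1 := by
        have h5 : ‖⟪x, xs⟫ • xs‖ ^ 2 = 1 := by rw [← hx2]; exact ht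
        rw [norm_smul, mul_pow, hxs] at h5
        simpa [sq_abs] using h5
      have h6 : (⟪x, xs⟫ - 1) * (⟪x, xs⟫ + 1) = 0 := by nlinarith
      rcases mul_eq_zero.mp h6 with h7 | h7
      · have : ⟪x, xs⟫ = 1 := by linarith
        exact Or.inr (Or.inr (Or.inl (by rw [hx2, this, one_smul])))
      · have : ⟪x, xs⟫ = -1 := by linarith
        exact Or.inr (Or.inr (Or.inr (by rw [hx2, this]; simp)))
  · rintro (rfl | ⟨hn, ho⟩ | rfl | rfl)
    · simp
    · rw [hn, ho]; norm_num
    · rw [hxs, hxs1]; norm_num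
    · rw [norm_neg, hxs]
      rw [inner_neg_left, hxs1]
      norm_num
end

section
/- Let x* ∈ R^n with ‖x*‖₂ = 1 and define μ_i = 1 + 2(x*_i)² for i ∈ [n]. Suppose R ∈ R^n satisfies |R_i − μ_i| ≤ (3/4)(x*_max)² for all i, where x*_max = max_i |x*_i|. If I = argmax_i R_i, then |x*_I| ≥ x*_max / 2. -/
/-- If `x` is a unit vector, `R` is uniformly within `(3/4)·(x_max)²` of the means
`μ_i = 1 + 2 (x i)²`, and `I` maximizes `R`, then `|x I| ≥ x_max / 2`. -/
theorem stmt10 (n : ℕ) (hn : 0 < n) (x R : Fin n → ℝ)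
    (hnorm : ∑ i, (x i) ^ 2 = 1)
    (xmax : ℝ)
    (hxmax : xmax = Finset.univ.sup' ⟨⟨0, hn⟩, Finset.mem_univ _⟩ (fun i => |x i|))
    (hR : ∀ i, |R i - (1 + 2 * (x i) ^ 2)| ≤ 3 / 4 * xmax ^ 2)
    (I : Fin n) (hI : ∀ i, R i ≤ R I) :
    |x I| ≥ xmax / 2 := by
  obtain ⟨J, -, hJ⟩ := Finset.exists_mem_eq_sup' (⟨⟨0, hn⟩, Finset.mem_univ _⟩ :
    Finset.univ.Nonempty) (fun i => |x i|)
  have hxm : xmax = |x J| := by rw [hxmax, hJ]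
  have hxm0 : 0 ≤ xmax := hxm ▸ abs_nonneg _
  have h1 := abs_le.mp (hR J)
  have h2 := abs_le.mp (hR I)
  have hJI := hI J
  have hJ2 : (x J) ^ 2 = xmax ^ 2 := by rw [hxm, sq_abs]
  have hsq : (xmax / 2) ^ 2 ≤ (x I) ^ 2 := by nlinarith
  nlinarith [abs_nonneg (x I), sq_abs (x I), sq_nonneg (|x I| - xmax/2)]
end
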